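/- Under the assumptions of the commutator estimate (b Lipschitz with div b = 0, J_n mollification, u bounded continuous), the commutators [J_n, b·∇]u converge to 0 uniformly on compact subsets of ℝ^d as n → ∞. -/

import Mathlib

open MeasureTheory Real Set Filter Metric

noncomputable section

variable {d l : ℕ}

/-- The rescaled mollifier `ρ_n(x) = n^d ρ(nx)`. -/
def mollifier (ρ : EuclideanSpace ℝ (Fin d) → ℝ) (n : ℕ)
    (x : EuclideanSpace ℝ (Fin d)) : ℝ :=
  (n : ℝ) ^ d * ρ ((n : ℝ) • x)

/-- The commutator `[J_n, b·∇]u = J_n((b·∇)u) − (b·∇)(J_n u)`; since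
`div b = 0` the first term is the classical function
`x ↦ ∫ ∇ρ_n(x−y)·b(y) u(y) dy`. -/
def mollifierCommutator (ρ : EuclideanSpace ℝ (Fin d) → ℝ)
    (b : EuclideanSpace ℝ (Fin d) → EuclideanSpace ℝ (Fin d))
    (u : EuclideanSpace ℝ (Fin d) → EuclideanSpace ℝ (Fin l)) (n : ℕ)
    (x : EuclideanSpace ℝ (Fin d)) : EuclideanSpace ℝ (Fin l) :=
  (∫ y, (fderiv ℝ (mollifier ρ n) (x - y) (b y)) • u y) -
    fderiv ℝ (fun z => ∫ y, mollifier ρ n (z - y) • u y) x (b x)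

open scoped Convolution

local notation "E" => EuclideanSpace ℝ (Fin d)
local notation "F" => EuclideanSpace ℝ (Fin l)

lemma contDiff_mollifier {ρ : E → ℝ} (hρ : ContDiff ℝ (⊤ : ℕ∞) ρ) (n : ℕ) :
    ContDiff ℝ (⊤ : ℕ∞) (mollifier ρ n) :=
  contDiff_const.mul (hρ.comp (contDiff_id.const_smul ((n : ℝ))))

lemma hasFDerivAt_mollifier {ρ : E → ℝ} (hρ : ContDiff ℝ (⊤ : ℕ∞) ρ) (n : ℕ) (x : E) :
    HasFDerivAt (mollifier ρ n) (((n : ℝ) ^ (d + 1)) • fderiv ℝ ρ ((n : ℝ) • x)) x := by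
  have h1 : HasFDerivAt ρ (fderiv ℝ ρ ((n : ℝ) • x)) ((n : ℝ) • x) :=
    (hρ.differentiable (by simp) _).hasFDerivAt
  have h2 : HasFDerivAt (fun y : E => (n : ℝ) • y)
      ((n : ℝ) • ContinuousLinearMap.id ℝ (EuclideanSpace ℝ (Fin d))) x :=
    (hasFDerivAt_id x).const_smul ((n : ℝ))
  have h3 := (h1.comp x h2).const_mul ((n : ℝ) ^ d)
  have h4 : HasFDerivAt (mollifier ρ n) (((n : ℝ) ^ d) • (fderiv ℝ ρ ((n : ℝ) • x)).comp
      ((n : ℝ) • ContinuousLinearMap.id ℝ E)) x := h3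
  convert h4 using 1
  ext v
  simp [pow_succ, mul_smul, mul_comm, mul_assoc, mul_left_comm]

lemma fderiv_mollifier {ρ : E → ℝ} (hρ : ContDiff ℝ (⊤ : ℕ∞) ρ) (n : ℕ) (x : E) :
    fderiv ℝ (mollifier ρ n) x = ((n : ℝ) ^ (d + 1)) • fderiv ℝ ρ ((n : ℝ) • x) :=
  (hasFDerivAt_mollifier hρ n x).fderiv

lemma mollifier_supp {ρ : E → ℝ}
    (hρsupp : Function.support ρ ⊆ closedBall 0 1) {n : ℕ} (hn : 1 ≤ n)
    {x : E} (hx : x ∉ closedBall (0:E) ((n:ℝ)⁻¹)) :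
    mollifier ρ n x = 0 := by
  have hn0 : (0:ℝ) < (n:ℝ) := by exact_mod_cast Nat.pos_of_ne_zero (by omega)
  have : ρ ((n:ℝ) • x) = 0 := by
    by_contra h
    apply hx
    have := hρsupp (Function.mem_support.2 h)
    simp only [mem_closedBall, dist_zero_right] at this ⊢
    rw [norm_smul] at this
    simp only [Real.norm_eq_abs, abs_of_pos hn0] at this
    rw [← le_div_iff₀' hn0] at this
    simpa [one_div] using this
  simp [mollifier, this]

lemma hasCompactSupport_mollifier {ρ : E → ℝ}
    (hρsupp : Function.support ρ ⊆ closedBall 0 1) {n : ℕ} (hn : 1 ≤ n) :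
    HasCompactSupport (mollifier ρ n) :=
  HasCompactSupport.intro (isCompact_closedBall 0 ((n:ℝ)⁻¹))
    (fun _ hx => mollifier_supp hρsupp hn hx)

lemma fderiv_rho_zero {ρ : E → ℝ}
    (hρsupp : Function.support ρ ⊆ closedBall 0 1)
    {z : E} (hz : z ∉ closedBall (0:E) 1) :
    fderiv ℝ ρ z = 0 := by
  by_contra h
  exact hz (closure_minimal hρsupp Metric.isClosed_closedBall (support_fderiv_subset ℝ h))

lemma fderiv_mollifier_zero {ρ : E → ℝ} (hρ : ContDiff ℝ (⊤ : ℕ∞) ρ)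
    (hρsupp : Function.support ρ ⊆ closedBall 0 1) {n : ℕ} (hn : 1 ≤ n)
    {x : E} (hx : x ∉ closedBall (0:E) ((n:ℝ)⁻¹)) :
    fderiv ℝ (mollifier ρ n) x = 0 := by
  have hn0 : (0:ℝ) < (n:ℝ) := by exact_mod_cast Nat.pos_of_ne_zero (by omega)
  rw [fderiv_mollifier hρ n x]
  have : (n:ℝ) • x ∉ closedBall (0:E) 1 := by
    simp only [mem_closedBall, dist_zero_right, not_le] at hx ⊢
    rw [norm_smul]
    simp only [Real.norm_eq_abs, abs_of_pos hn0]
    calc (1:ℝ) = (n:ℝ) * (n:ℝ)⁻¹ := by field_simp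
    _ < (n:ℝ) * ‖x‖ := by exact mul_lt_mul_of_pos_left hx hn0
  rw [fderiv_rho_zero hρsupp this, smul_zero]

lemma integrable_aux {F' : Type*} [NormedAddCommGroup F'] [NormedSpace ℝ F']
    {g : E → F'} (hg : Continuous g)
    (x : E) (r : ℝ) (hsupp : ∀ y ∉ closedBall x r, g y = 0) :
    Integrable g volume :=
  hg.integrable_of_hasCompactSupport
    (HasCompactSupport.intro (isCompact_closedBall x r) hsupp)

lemma integral_fderiv_apply {f : E → ℝ} (hf : ContDiff ℝ (⊤ : ℕ∞) f)
    (hcf : HasCompactSupport f) (v : E) :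
    ∫ z, fderiv ℝ f z v = 0 := by
  obtain ⟨r, hr⟩ := hcf.isBounded.subset_closedBall 0
  have hDf0 : ∀ y ∉ closedBall (0:E) r, fderiv ℝ f y = 0 := by
    intro y hy
    by_contra h
    exact hy (hr (support_fderiv_subset ℝ h))
  have h1 := hcf.hasFDerivAt_convolution_left (μ := volume) (ContinuousLinearMap.mul ℝ ℝ)
    (hf.of_le (by simp)) (locallyIntegrable_const (1:ℝ)) (0 : E)
  have h2 : (f ⋆[ContinuousLinearMap.mul ℝ ℝ, volume] (fun _ : E => (1:ℝ)))
      = fun _ => ∫ t, f t := by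
    funext z; simp [convolution_def]
  rw [h2] at h1
  have h3 := h1.unique (hasFDerivAt_const _ _)
  have h4 : ((fderiv ℝ f ⋆[(ContinuousLinearMap.mul ℝ ℝ).precompL E, volume]
      (fun _ : E => (1:ℝ))) 0) v = 0 := by rw [h3]; rfl
  rw [convolution_def, ContinuousLinearMap.integral_apply] at h4
  · simpa using h4
  · refine integrable_aux ?_ 0 r fun y hy => ?_
    · exact (((ContinuousLinearMap.mul ℝ ℝ).precompL E).continuous.comp
        (hf.continuous_fderiv (by simp))).clm_apply continuous_const
    · simp [hDf0 y hy]

lemma clm_apply_eq_sum (T : E →L[ℝ] ℝ) (v : E) :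
    T v = ∑ i, v i * T (EuclideanSpace.single i 1) := by
  have hv : v = ∑ i, v i • EuclideanSpace.single i (1:ℝ) := by
    apply PiLp.ext
    intro j
    rw [WithLp.ofLp_sum, Finset.sum_apply]
    simp [EuclideanSpace.single_apply]
  conv_lhs => rw [hv, map_sum]
  simp [smul_eq_mul]

lemma commutator_eq
    {ρ : E → ℝ} (hρ : ContDiff ℝ (⊤ : ℕ∞) ρ) (hρsupp : Function.support ρ ⊆ closedBall 0 1)
    {b : E → E} (hbc : Continuous b)
    (hbdiv : ∀ φ : E → ℝ, ContDiff ℝ (⊤ : ℕ∞) φ → HasCompactSupport φ →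
      ∫ y, ∑ i, b y i * fderiv ℝ φ y (EuclideanSpace.single i 1) = 0)
    {u : E → F} (hu : Continuous u) {n : ℕ} (hn : 1 ≤ n) (x : E) :
    mollifierCommutator ρ b u n x
      = ∫ y, (fderiv ℝ (mollifier ρ n) (x - y) (b y - b x)) • (u y - u x) := by
  set Dm : E → E →L[ℝ] ℝ := fderiv ℝ (mollifier ρ n) with hDm
  have hDmc : Continuous Dm := (contDiff_mollifier hρ n).continuous_fderiv (by simp)
  have hDmc' : Continuous fun y => Dm (x - y) := hDmc.comp (continuous_const.sub continuous_id)
  have hxy : ∀ y ∉ closedBall x ((n:ℝ)⁻¹), Dm (x - y) = 0 := by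
    intro y hy
    refine fderiv_mollifier_zero hρ hρsupp hn ?_
    simp only [mem_closedBall, dist_zero_right, not_le] at hy ⊢
    rw [← dist_eq_norm, dist_comm]
    exact hy
  -- integrability facts
  have I1 : Integrable (fun y => Dm (x - y) (b y) • u y) volume :=
    integrable_aux ((hDmc'.clm_apply hbc).smul hu) x ((n:ℝ)⁻¹)
      (fun y hy => by simp [hxy y hy])
  have I2 : Integrable (fun y => Dm (x - y) (b x) • u y) volume :=
    integrable_aux ((hDmc'.clm_apply continuous_const).smul hu) x ((n:ℝ)⁻¹)
      (fun y hy => by simp [hxy y hy])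
  have I4 : Integrable (fun y => Dm (x - y) (b y - b x) • (u y - u x)) volume :=
    integrable_aux ((hDmc'.clm_apply (hbc.sub continuous_const)).smul
      (hu.sub continuous_const)) x ((n:ℝ)⁻¹) (fun y hy => by simp [hxy y hy])
  have I4b : Integrable (fun y => Dm (x - y) (b y - b x) • u x) volume :=
    integrable_aux ((hDmc'.clm_apply (hbc.sub continuous_const)).smul
      continuous_const) x ((n:ℝ)⁻¹) (fun y hy => by simp [hxy y hy])
  have I5 : Integrable (fun y => Dm (x - y) (b y)) volume :=
    integrable_aux (hDmc'.clm_apply hbc) x ((n:ℝ)⁻¹) (fun y hy => by simp [hxy y hy])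
  have I6 : Integrable (fun y => Dm (x - y) (b x)) volume :=
    integrable_aux (hDmc'.clm_apply continuous_const) x ((n:ℝ)⁻¹)
      (fun y hy => by simp [hxy y hy])
  -- Step A: the derivative of the mollification
  have hsecond : fderiv ℝ (fun z => ∫ y, mollifier ρ n (z - y) • u y) x (b x)
      = ∫ y, Dm (x - y) (b x) • u y := by
    have hconv : (fun z => ∫ y, mollifier ρ n (z - y) • u y)
        = (mollifier ρ n) ⋆[ContinuousLinearMap.lsmul ℝ ℝ, volume] u := by
      funext z
      rw [convolution_def]
      have := MeasureTheory.integral_sub_left_eq_self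
        (fun t => mollifier ρ n t • u (z - t)) volume z
      simp only [sub_sub_cancel] at this
      simpa using this
    have hD := (hasCompactSupport_mollifier hρsupp hn).hasFDerivAt_convolution_left
      (μ := volume) (ContinuousLinearMap.lsmul ℝ ℝ)
      ((contDiff_mollifier hρ n).of_le (by simp)) hu.locallyIntegrable x
    have hD2 : fderiv ℝ (fun z => ∫ y, mollifier ρ n (z - y) • u y) x
        = (fderiv ℝ (mollifier ρ n) ⋆[(ContinuousLinearMap.lsmul ℝ ℝ).precompL E, volume] u) x := by
      rw [hconv]; exact hD.fderiv
    have Iconv : Integrable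
        (fun t => ((ContinuousLinearMap.lsmul ℝ ℝ).precompL E) (Dm t) (u (x - t))) volume := by
      refine integrable_aux ?_ 0 ((n:ℝ)⁻¹) fun y hy => ?_
      · exact ((((ContinuousLinearMap.lsmul ℝ ℝ).precompL E).continuous.comp hDmc).clm_apply
          (hu.comp (continuous_const.sub continuous_id)))
      · have : Dm y = 0 := fderiv_mollifier_zero hρ hρsupp hn hy
        simp [this]
    rw [hD2, convolution_def, ContinuousLinearMap.integral_apply Iconv]
    simp only [ContinuousLinearMap.precompL_apply, ContinuousLinearMap.lsmul_apply]
    have := MeasureTheory.integral_sub_left_eq_self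
      (fun t => Dm t (b x) • u (x - t)) volume x
    simp only [sub_sub_cancel] at this
    exact this.symm
  -- Claim 1 : `∫ Dm (x-y) (b y) = 0` using the divergence-free hypothesis
  have claim1 : ∫ y, Dm (x - y) (b y) = 0 := by
    set φ : E → ℝ := fun y => mollifier ρ n (x - y) with hφ
    have hφs : ContDiff ℝ (⊤ : ℕ∞) φ :=
      (contDiff_mollifier hρ n).comp (contDiff_const.sub contDiff_id)
    have hφc : HasCompactSupport φ := by
      refine HasCompactSupport.intro (isCompact_closedBall x ((n:ℝ)⁻¹)) fun y hy => ?_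
      refine mollifier_supp hρsupp hn ?_
      simp only [mem_closedBall, dist_zero_right, not_le] at hy ⊢
      rw [← dist_eq_norm, dist_comm]
      exact hy
    have hφd : ∀ y, fderiv ℝ φ y = -(Dm (x - y)) := by
      intro y
      have h2 : HasFDerivAt (fun y : E => x - y)
          (0 - ContinuousLinearMap.id ℝ E) y :=
        (hasFDerivAt_const x y).sub (hasFDerivAt_id y)
      have h1 : HasFDerivAt (mollifier ρ n) (Dm (x - y)) (x - y) :=
        ((contDiff_mollifier hρ n).differentiable (by simp) (x - y)).hasFDerivAt
      have h3 : HasFDerivAt φ ((Dm (x - y)).comp (0 - ContinuousLinearMap.id ℝ E)) y :=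
        h1.comp y h2
      rw [h3.fderiv]
      ext v
      simp
    have h0 := hbdiv φ hφs hφc
    have heq : (fun y => ∑ i, b y i * fderiv ℝ φ y (EuclideanSpace.single i 1))
        = fun y => -(Dm (x - y) (b y)) := by
      funext y
      rw [← clm_apply_eq_sum (fderiv ℝ φ y) (b y), hφd y]
      simp
    rw [heq, integral_neg, neg_eq_zero] at h0
    exact h0
  -- Claim 2 : `∫ Dm (x-y) (b x) = 0`
  have claim2 : ∫ y, Dm (x - y) (b x) = 0 := by
    have h := MeasureTheory.integral_sub_left_eq_self (fun t => Dm t (b x)) volume x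
    rw [h]
    exact integral_fderiv_apply (contDiff_mollifier hρ n)
      (hasCompactSupport_mollifier hρsupp hn) (b x)
  -- put everything together
  have hscalar : ∫ y, Dm (x - y) (b y - b x) = 0 := by
    have : (fun y => Dm (x - y) (b y - b x))
        = fun y => Dm (x - y) (b y) - Dm (x - y) (b x) := by
      funext y; simp
    rw [this, integral_sub I5 I6, claim1, claim2, sub_zero]
  have step1 : mollifierCommutator ρ b u n x
      = ∫ y, Dm (x - y) (b y - b x) • u y := by
    rw [mollifierCommutator, hsecond, ← integral_sub I1 I2]
    congr 1
    funext y
    rw [map_sub, sub_smul]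
  rw [step1]
  have split : (fun y => Dm (x - y) (b y - b x) • u y)
      = fun y => Dm (x - y) (b y - b x) • (u y - u x)
        + Dm (x - y) (b y - b x) • u x := by
    funext y; rw [smul_sub]; abel
  rw [split, integral_add I4 I4b]
  have : ∫ y, Dm (x - y) (b y - b x) • u x
      = (∫ y, Dm (x - y) (b y - b x)) • u x := integral_smul_const _ _
  rw [this, hscalar, zero_smul, add_zero]


/-- the commutators `[J_n, b·∇]u` converge to `0` uniformly on
compact subsets of `ℝ^d` as `n → ∞`. -/
theorem mollifier_commutator_tendsto_zero
    (ρ : EuclideanSpace ℝ (Fin d) → ℝ) (hρ : ContDiff ℝ (⊤ : ℕ∞) ρ)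
    (hρ0 : ∀ x, 0 ≤ ρ x) (hρ1 : ∀ x, ρ x ≤ 1)
    (hρsupp : Function.support ρ ⊆ closedBall 0 1)
    (L : NNReal) (b : EuclideanSpace ℝ (Fin d) → EuclideanSpace ℝ (Fin d))
    (hb : LipschitzWith L b)
    (hdiv : ∀ φ : EuclideanSpace ℝ (Fin d) → ℝ, ContDiff ℝ (⊤ : ℕ∞) φ →
      HasCompactSupport φ →
      ∫ x, ∑ i, b x i * fderiv ℝ φ x (EuclideanSpace.single i 1) = 0)
    (u : EuclideanSpace ℝ (Fin d) → EuclideanSpace ℝ (Fin l))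
    (hu : Continuous u) (hub : ∃ B, ∀ x, ‖u x‖ ≤ B) :
    ∀ K : Set (EuclideanSpace ℝ (Fin d)), IsCompact K →
      TendstoUniformlyOn (fun n x => mollifierCommutator ρ b u n x)
        (fun _ => 0) atTop K := by
  intro K hK
  have hρcs : HasCompactSupport ρ :=
    HasCompactSupport.intro (isCompact_closedBall 0 1)
      (fun x hx => by by_contra h; exact hx (hρsupp (Function.mem_support.2 h)))
  obtain ⟨M, hM⟩ := (hρcs.fderiv ℝ).exists_bound_of_continuous (hρ.continuous_fderiv (by simp))
  have hM0 : 0 ≤ M := le_trans (norm_nonneg _) (hM 0)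
  set V := (volume (ball (0:E) 1)).toReal with hV
  have hV0 : 0 ≤ V := ENNReal.toReal_nonneg
  set C := M * (L:ℝ) * V + 1 with hC
  have hC0 : 0 < C := by positivity
  rw [Metric.tendstoUniformlyOn_iff]
  intro ε hε
  set ε₀ := ε / (2 * C) with hε₀
  have hε₀0 : 0 < ε₀ := by positivity
  have hK' : IsCompact (cthickening 1 K) := hK.cthickening
  have huc : UniformContinuousOn u (cthickening 1 K) :=
    hK'.uniformContinuousOn_of_continuous hu.continuousOn
  rw [Metric.uniformContinuousOn_iff] at huc
  obtain ⟨δ, hδ0, hδ⟩ := huc ε₀ hε₀0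
  obtain ⟨N, hN⟩ := exists_nat_gt (max 1 (1/δ))
  filter_upwards [eventually_ge_atTop N] with n hnN
  intro x hxK
  have hNn : (max 1 (1/δ) : ℝ) < n := lt_of_lt_of_le hN (by exact_mod_cast hnN)
  have hn1 : 1 ≤ n := by
    have h : (1:ℝ) < n := lt_of_le_of_lt (le_max_left _ _) hNn
    exact_mod_cast h.le
  have hn0 : (0:ℝ) < n := by
    have h : (1:ℝ) < n := lt_of_le_of_lt (le_max_left _ _) hNn
    linarith
  have hn0' : (n:ℝ) ≠ 0 := ne_of_gt hn0
  have hinv0 : (0:ℝ) ≤ (n:ℝ)⁻¹ := by positivity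
  have hinv_lt_δ : (n:ℝ)⁻¹ < δ := by
    rw [inv_lt_comm₀ hn0 hδ0]
    calc δ⁻¹ = 1/δ := (one_div δ).symm
    _ ≤ max 1 (1/δ) := le_max_right _ _
    _ < n := hNn
  have hinv_le_one : (n:ℝ)⁻¹ ≤ 1 := by
    rw [inv_le_one_iff₀]
    right
    exact le_trans (le_max_left _ _) hNn.le
  rw [commutator_eq hρ hρsupp hb.continuous hdiv hu hn1 x]
  rw [dist_eq_norm, zero_sub, norm_neg]
  set Dm : E → E →L[ℝ] ℝ := fderiv ℝ (mollifier ρ n) with hDm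
  set S := closedBall x ((n:ℝ)⁻¹) with hS
  have hxy : ∀ y ∉ S, Dm (x - y) = 0 := by
    intro y hy
    refine fderiv_mollifier_zero hρ hρsupp hn1 ?_
    simp only [hS, mem_closedBall, dist_zero_right, not_le] at hy ⊢
    rw [← dist_eq_norm, dist_comm]
    exact hy
  have hsupp0 : ∀ y ∉ S, Dm (x - y) (b y - b x) • (u y - u x) = 0 := by
    intro y hy; simp [hxy y hy]
  rw [← setIntegral_eq_integral_of_forall_compl_eq_zero hsupp0]
  have hvol : volume S < ⊤ := measure_closedBall_lt_top
  -- pointwise bound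
  have hDmbd : ∀ (z : E) (w : E), ‖Dm z w‖ ≤ (n:ℝ)^(d+1) * M * ‖w‖ := by
    intro z w
    rw [hDm, fderiv_mollifier hρ n z, ContinuousLinearMap.smul_apply, norm_smul,
      Real.norm_eq_abs, abs_of_nonneg (by positivity : (0:ℝ) ≤ (n:ℝ)^(d+1))]
    rw [mul_assoc]
    refine mul_le_mul_of_nonneg_left ?_ (by positivity)
    calc ‖fderiv ℝ ρ ((n:ℝ) • z) w‖ ≤ ‖fderiv ℝ ρ ((n:ℝ) • z)‖ * ‖w‖ :=
      ContinuousLinearMap.le_opNorm _ _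
    _ ≤ M * ‖w‖ := mul_le_mul_of_nonneg_right (hM _) (norm_nonneg _)
  have hptwise : ∀ y ∈ S, ‖Dm (x - y) (b y - b x) • (u y - u x)‖
      ≤ ((n:ℝ)^(d+1) * M) * ((L:ℝ) * (n:ℝ)⁻¹) * ε₀ := by
    intro y hy
    simp only [hS, mem_closedBall] at hy
    have h1 : ‖Dm (x - y) (b y - b x)‖ ≤ ((n:ℝ)^(d+1) * M) * ((L:ℝ) * (n:ℝ)⁻¹) := by
      calc ‖Dm (x - y) (b y - b x)‖ ≤ (n:ℝ)^(d+1) * M * ‖b y - b x‖ := hDmbd _ _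
      _ ≤ ((n:ℝ)^(d+1) * M) * ((L:ℝ) * (n:ℝ)⁻¹) := by
          refine mul_le_mul_of_nonneg_left ?_ (by positivity)
          rw [← dist_eq_norm]
          calc dist (b y) (b x) ≤ (L:ℝ) * dist y x := hb.dist_le_mul y x
          _ ≤ (L:ℝ) * (n:ℝ)⁻¹ := by
              exact mul_le_mul_of_nonneg_left hy (by positivity)
    have h2 : ‖u y - u x‖ ≤ ε₀ := by
      have hyK : y ∈ cthickening 1 K := by
        apply mem_cthickening_of_dist_le y x 1 K hxK
        exact le_trans hy hinv_le_one
      have hxK' : x ∈ cthickening 1 K := self_subset_cthickening K hxK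
      have := hδ y hyK x hxK' (lt_of_le_of_lt hy hinv_lt_δ)
      rw [dist_eq_norm] at this
      exact this.le
    calc ‖Dm (x - y) (b y - b x) • (u y - u x)‖
        = ‖Dm (x - y) (b y - b x)‖ * ‖u y - u x‖ := norm_smul _ _
    _ ≤ ((n:ℝ)^(d+1) * M) * ((L:ℝ) * (n:ℝ)⁻¹) * ε₀ :=
        mul_le_mul h1 h2 (norm_nonneg _) (by positivity)
  have hbound : ‖∫ y in S, Dm (x - y) (b y - b x) • (u y - u x)‖
      ≤ ((n:ℝ)^(d+1) * M) * ((L:ℝ) * (n:ℝ)⁻¹) * ε₀ * (volume S).toReal :=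
    norm_setIntegral_le_of_norm_le_const hvol hptwise
  have hvolS : (volume S).toReal = ((n:ℝ)⁻¹)^d * V := by
    rw [hS, Measure.addHaar_closedBall volume x hinv0, ENNReal.toReal_mul,
      ENNReal.toReal_ofReal (by positivity), finrank_euclideanSpace_fin]
  rw [hvolS] at hbound
  have hfinal : ((n:ℝ)^(d+1) * M) * ((L:ℝ) * (n:ℝ)⁻¹) * ε₀ * (((n:ℝ)⁻¹)^d * V)
      = M * (L:ℝ) * V * ε₀ := by
    have hpow : (n:ℝ)^(d+1) * ((n:ℝ)⁻¹ * ((n:ℝ)⁻¹)^d) = 1 := by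
      rw [← pow_succ', ← mul_pow, mul_inv_cancel₀ hn0', one_pow]
    calc ((n:ℝ)^(d+1) * M) * ((L:ℝ) * (n:ℝ)⁻¹) * ε₀ * (((n:ℝ)⁻¹)^d * V)
        = (M * (L:ℝ) * V * ε₀) * ((n:ℝ)^(d+1) * ((n:ℝ)⁻¹ * ((n:ℝ)⁻¹)^d)) := by ring
    _ = M * (L:ℝ) * V * ε₀ := by rw [hpow, mul_one]
  rw [hfinal] at hbound
  calc ‖∫ y in S, Dm (x - y) (b y - b x) • (u y - u x)‖
      ≤ M * (L:ℝ) * V * ε₀ := hbound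
  _ ≤ C * ε₀ := by
      apply mul_le_mul_of_nonneg_right _ hε₀0.le
      rw [hC]; linarith
  _ = ε / 2 := by rw [hε₀]; field_simp
  _ < ε := by linarith

end
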